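/- arXiv:1303.7092 — 5 statements merged into one kernel-verified Lean document; each statement's English description precedes it below -/
import Mathlib

section
/- For any symmetric p×p matrix Ψ with Δ^T Ψ Δ ≥ 0 for all Δ, set J, and γ > 0: κ'_RE ≤ (2+γ)|J| κ_{1,J,J}^(γ), where κ'_RE = inf{|J|·(Δ^T Ψ Δ)/|Δ_J|_1^2 : Δ ∈ C_J^(γ), Δ≠0} and κ_{1,J,J}^(γ) = inf{|ΨΔ|_∞ : Δ ∈ C_J^(γ), |Δ_J|_1 = 1}. -/
/-!
On the cone `|Δ_{Jᶜ}|₁ ≤ (1 + γ)|Δ_J|₁` one has `|Δ|₁ ≤ (2 + γ)|Δ_J|₁`, so Hölder's inequality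
`Δᵀ Ψ Δ ≤ |Δ|₁ |ΨΔ|_∞` gives `|J| Δᵀ Ψ Δ / |Δ_J|₁² ≤ (2 + γ)|J| |ΨΔ|_∞` whenever `|Δ_J|₁ = 1`.
Taking infima over such `Δ` yields the bound.
-/

open Matrix Finset

section Cone

variable {ι : Type*}

lemma sum_abs_le_of_sum_compl_le [Fintype ι] [DecidableEq ι] {J : Finset ι} {γ : ℝ} {Δ : ι → ℝ}
    (hcone : ∑ k ∈ Jᶜ, |Δ k| ≤ (1 + γ) * ∑ k ∈ J, |Δ k|) :
    ∑ k, |Δ k| ≤ (2 + γ) * ∑ k ∈ J, |Δ k| := by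
  rw [← sum_add_sum_compl J]
  linarith

lemma dotProduct_le_sum_abs_mul_iSup_abs [Fintype ι] (v w : ι → ℝ) :
    v ⬝ᵥ w ≤ (∑ i, |v i|) * ⨆ i, |w i| := by
  rw [sum_mul]
  refine sum_le_sum fun i _ => ?_
  calc v i * w i ≤ |v i| * |w i| := by rw [← abs_mul]; exact le_abs_self _
    _ ≤ |v i| * ⨆ i, |w i| := by
      gcongr
      exact le_ciSup (Set.finite_range fun i => |w i|).bddAbove i

lemma dotProduct_le_of_sum_compl_le [Fintype ι] [DecidableEq ι] {J : Finset ι} {γ : ℝ} {Δ : ι → ℝ}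
    (hcone : ∑ k ∈ Jᶜ, |Δ k| ≤ (1 + γ) * ∑ k ∈ J, |Δ k|) (w : ι → ℝ) :
    Δ ⬝ᵥ w ≤ (2 + γ) * (∑ k ∈ J, |Δ k|) * ⨆ i, |w i| :=
  (dotProduct_le_sum_abs_mul_iSup_abs Δ w).trans <|
    mul_le_mul_of_nonneg_right (sum_abs_le_of_sum_compl_le hcone)
      (Real.iSup_nonneg fun _ => abs_nonneg _)

lemma sum_abs_single [DecidableEq ι] {J : Finset ι} {j : ι} (hj : j ∈ J) :
    ∑ k ∈ J, |(Pi.single j 1 : ι → ℝ) k| = 1 := by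
  rw [sum_eq_single_of_mem j hj fun k _ hk => by simp [hk]]
  simp

lemma sum_compl_abs_single [Fintype ι] [DecidableEq ι] {J : Finset ι} {j : ι} (hj : j ∈ J) :
    ∑ k ∈ Jᶜ, |(Pi.single j 1 : ι → ℝ) k| = 0 :=
  sum_eq_zero fun k hk => by
    rw [Pi.single_eq_of_ne (by rintro rfl; exact mem_compl.1 hk hj), abs_zero]

end Cone

lemma le_mul_csInf_of_forall_le_mul {a c : ℝ} {B : Set ℝ} (hc : 0 < c) (hB : B.Nonempty)
    (h : ∀ x ∈ B, a ≤ c * x) : a ≤ c * sInf B := by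
  rw [← div_le_iff₀' hc]
  exact le_csInf hB fun x hx => (div_le_iff₀' hc).2 (h x hx)

theorem stmt2_general (p : ℕ) (Ψ : Matrix (Fin p) (Fin p) ℝ)
    (hΨpsd : ∀ Δ : Fin p → ℝ, 0 ≤ Δ ⬝ᵥ Ψ.mulVec Δ)
    (J : Finset (Fin p)) (γ : ℝ) (hγ : 0 < γ) :
    sInf {x : ℝ | ∃ Δ : Fin p → ℝ, Δ ≠ 0 ∧
        (∑ k ∈ Jᶜ, |Δ k| ≤ (1 + γ) * ∑ k ∈ J, |Δ k|) ∧
        x = (J.card : ℝ) * (Δ ⬝ᵥ Ψ.mulVec Δ) / (∑ k ∈ J, |Δ k|) ^ 2} ≤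
    (2 + γ) * (J.card : ℝ) *
      sInf {x : ℝ | ∃ Δ : Fin p → ℝ,
        (∑ k ∈ Jᶜ, |Δ k| ≤ (1 + γ) * ∑ k ∈ J, |Δ k|) ∧
        (∑ k ∈ J, |Δ k| = 1) ∧
        x = ⨆ k, |Ψ.mulVec Δ k|} := by
  rcases J.eq_empty_or_nonempty with rfl | ⟨j, hj⟩
  · rw [card_empty, Nat.cast_zero, mul_zero, zero_mul]
    exact Real.sInf_nonpos <| by rintro x ⟨Δ, -, -, rfl⟩; simp
  have hbdd : BddBelow {x : ℝ | ∃ Δ : Fin p → ℝ, Δ ≠ 0 ∧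
      (∑ k ∈ Jᶜ, |Δ k| ≤ (1 + γ) * ∑ k ∈ J, |Δ k|) ∧
      x = (J.card : ℝ) * (Δ ⬝ᵥ Ψ.mulVec Δ) / (∑ k ∈ J, |Δ k|) ^ 2} :=
    ⟨0, by rintro x ⟨Δ, -, -, rfl⟩; have := hΨpsd Δ; positivity⟩
  have hsingle_cone : ∑ k ∈ Jᶜ, |(Pi.single j 1 : Fin p → ℝ) k| ≤
      (1 + γ) * ∑ k ∈ J, |(Pi.single j 1 : Fin p → ℝ) k| := by
    rw [sum_abs_single hj, sum_compl_abs_single hj]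
    linarith
  have hJ : (0 : ℝ) < J.card := Nat.cast_pos.2 (card_pos.2 ⟨j, hj⟩)
  refine le_mul_csInf_of_forall_le_mul (by positivity)
    ⟨_, _, hsingle_cone, sum_abs_single hj, rfl⟩ ?_
  rintro x ⟨Δ, hcone, hone, rfl⟩
  have hΔ : Δ ≠ 0 := by rintro rfl; simp at hone
  calc _ ≤ (J.card : ℝ) * (Δ ⬝ᵥ Ψ.mulVec Δ) / (∑ k ∈ J, |Δ k|) ^ 2 :=
        csInf_le hbdd ⟨Δ, hΔ, hcone, rfl⟩
    _ ≤ (J.card : ℝ) * ((2 + γ) * 1 * ⨆ k, |Ψ.mulVec Δ k|) := by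
        rw [hone, one_pow, div_one, ← hone]
        gcongr
        exact dotProduct_le_of_sum_compl_le hcone _
    _ = (2 + γ) * (J.card : ℝ) * ⨆ k, |Ψ.mulVec Δ k| := by ring

/-- `κ'_RE ≤ (2+γ)|J| κ_{1,J,J}^(γ)` for a symmetric positive
semidefinite matrix `Ψ`. -/
theorem stmt2 (p : ℕ) (Ψ : Matrix (Fin p) (Fin p) ℝ) (hΨsymm : Ψ.IsSymm)
    (hΨpsd : ∀ Δ : Fin p → ℝ, 0 ≤ Δ ⬝ᵥ Ψ.mulVec Δ)
    (J : Finset (Fin p)) (γ : ℝ) (hγ : 0 < γ) :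
    sInf {x : ℝ | ∃ Δ : Fin p → ℝ, Δ ≠ 0 ∧
        (∑ k ∈ Jᶜ, |Δ k| ≤ (1 + γ) * ∑ k ∈ J, |Δ k|) ∧
        x = (J.card : ℝ) * (Δ ⬝ᵥ Ψ.mulVec Δ) / (∑ k ∈ J, |Δ k|) ^ 2} ≤
    (2 + γ) * (J.card : ℝ) *
      sInf {x : ℝ | ∃ Δ : Fin p → ℝ,
        (∑ k ∈ Jᶜ, |Δ k| ≤ (1 + γ) * ∑ k ∈ J, |Δ k|) ∧
        (∑ k ∈ J, |Δ k| = 1) ∧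
        x = ⨆ k, |Ψ.mulVec Δ k|} :=
  stmt2_general p Ψ hΨpsd J γ hγ
end

section
/- Let Ψ be a p×p matrix, γ > 0, and s ≥ 1. If J ⊆ {1,...,p} has |J| ≤ s, then κ_{1,J,J}^(γ) ≥ (1/s) · min_{k=1,...,p} inf{|ΨΔ|_∞ : Δ ∈ ℝ^p, Δ_k = 1, |Δ|_1 ≤ (2+γ)s}. -/
open Matrix
open scoped ENNReal

/-- Proposition 1: if `|J| ≤ s` then
`κ_{1,J,J}^(γ) ≥ (1/s) min_k inf{|ΨΔ|_∞ : Δ_k = 1, |Δ|_1 ≤ (2+γ)s}`.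
The infima are taken in `ℝ≥0∞` so that the infimum over an empty set is `∞`,
in accordance with the convention `κ_{1,∅,J}^(γ) = ∞`. -/
theorem stmt4 (p : ℕ) (Ψ : Matrix (Fin p) (Fin p) ℝ)
    (J : Finset (Fin p)) (γ : ℝ) (hγ : 0 < γ) (s : ℕ) (hs : 1 ≤ s)
    (hJ : J.card ≤ s) :
    (1 / (s : ℝ≥0∞)) *
      sInf {x : ℝ≥0∞ | ∃ k : Fin p, ∃ Δ : Fin p → ℝ,
        Δ k = 1 ∧ (∑ j, |Δ j| ≤ (2 + γ) * s) ∧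
        x = ENNReal.ofReal (⨆ j, |Ψ.mulVec Δ j|)} ≤
    sInf {x : ℝ≥0∞ | ∃ Δ : Fin p → ℝ,
        (∑ k ∈ Jᶜ, |Δ k| ≤ (1 + γ) * ∑ k ∈ J, |Δ k|) ∧
        (∑ k ∈ J, |Δ k| = 1) ∧
        x = ENNReal.ofReal (⨆ k, |Ψ.mulVec Δ k|)} := by
  refine le_sInf ?_
  rintro x ⟨Δ, hcone, hsum, rfl⟩
  have hs0 : (0:ℝ) < s := by positivity
  -- find k ∈ J with |Δ k| ≥ 1/s
  have hex : ∃ k ∈ J, (1:ℝ)/s ≤ |Δ k| := by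
    by_contra h
    push_neg at h
    have hJn : J.Nonempty := by
      rcases Finset.eq_empty_or_nonempty J with hJ0 | hJn
      · rw [hJ0] at hsum; simp at hsum
      · exact hJn
    have hlt : ∑ k ∈ J, |Δ k| < ∑ k ∈ J, (1:ℝ)/s :=
      Finset.sum_lt_sum_of_nonempty hJn h
    rw [hsum, Finset.sum_const, nsmul_eq_mul, mul_one_div] at hlt
    have h2 : (J.card : ℝ) / s ≤ 1 := by
      rw [div_le_one hs0]; exact_mod_cast hJ
    linarith
  obtain ⟨k, hkJ, hk⟩ := hex
  have hc : (0:ℝ) < |Δ k| := lt_of_lt_of_le (by positivity) hk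
  have hΔk : Δ k ≠ 0 := fun h => by simp [h] at hc
  have h1s : (1:ℝ) ≤ |Δ k| * s := (div_le_iff₀ hs0).mp hk
  -- total ℓ1 bound
  have htot : ∑ j, |Δ j| ≤ 2 + γ := by
    rw [← Finset.sum_add_sum_compl J]
    nlinarith [hcone, hsum]
  set Δ' : Fin p → ℝ := fun j => Δ j / Δ k with hΔ'
  have h1 : Δ' k = 1 := div_self hΔk
  have h2 : ∑ j, |Δ' j| ≤ (2 + γ) * s := by
    have heq : ∑ j, |Δ' j| = (∑ j, |Δ j|) / |Δ k| := by
      rw [Finset.sum_div]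
      exact Finset.sum_congr rfl fun j _ => by simp [hΔ', abs_div]
    rw [heq, div_le_iff₀ hc]
    nlinarith [htot, h1s, hγ]
  -- the supremum bound
  have hmul : ∀ j, Ψ.mulVec Δ' j = Ψ.mulVec Δ j / Δ k := by
    intro j
    have : Δ' = (Δ k)⁻¹ • Δ := by
      funext i; simp [hΔ', div_eq_inv_mul]
    rw [this, Matrix.mulVec_smul]
    simp [div_eq_inv_mul]
  have hbdd : BddAbove (Set.range fun j => |Ψ.mulVec Δ j|) := by
    exact Set.Finite.bddAbove (Set.finite_range _)
  have : Nonempty (Fin p) := ⟨k⟩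
  have hsup : (⨆ j, |Ψ.mulVec Δ' j|) ≤ s * ⨆ j, |Ψ.mulVec Δ j| := by
    refine ciSup_le fun j => ?_
    have hle : |Ψ.mulVec Δ j| ≤ ⨆ i, |Ψ.mulVec Δ i| :=
      le_ciSup (f := fun i => |Ψ.mulVec Δ i|) (Set.Finite.bddAbove (Set.finite_range _)) j
    have : |Ψ.mulVec Δ' j| = |Ψ.mulVec Δ j| / |Δ k| := by
      rw [hmul, abs_div]
    rw [this, div_le_iff₀ hc]
    nlinarith [abs_nonneg (Ψ.mulVec Δ j), hle, hs0, hc]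
  -- membership in the LHS infimum set
  have hmem : ENNReal.ofReal (⨆ j, |Ψ.mulVec Δ' j|) ∈
      {x : ℝ≥0∞ | ∃ k : Fin p, ∃ Δ : Fin p → ℝ,
        Δ k = 1 ∧ (∑ j, |Δ j| ≤ (2 + γ) * s) ∧
        x = ENNReal.ofReal (⨆ j, |Ψ.mulVec Δ j|)} :=
    ⟨k, Δ', h1, h2, rfl⟩
  have hinf := sInf_le hmem
  have hofs : ENNReal.ofReal (⨆ j, |Ψ.mulVec Δ' j|) ≤
      (s : ℝ≥0∞) * ENNReal.ofReal (⨆ j, |Ψ.mulVec Δ j|) := by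
    calc ENNReal.ofReal (⨆ j, |Ψ.mulVec Δ' j|)
        ≤ ENNReal.ofReal (s * ⨆ j, |Ψ.mulVec Δ j|) := ENNReal.ofReal_le_ofReal hsup
      _ = (s : ℝ≥0∞) * ENNReal.ofReal (⨆ j, |Ψ.mulVec Δ j|) := by
          rw [ENNReal.ofReal_mul (le_of_lt hs0)]
          congr 1
          simp [ENNReal.ofReal_natCast]
  have hsne : (s : ℝ≥0∞) ≠ 0 := by
    simp; omega
  calc (1 / (s : ℝ≥0∞)) * sInf _ ≤ (1 / (s : ℝ≥0∞)) *
        ((s : ℝ≥0∞) * ENNReal.ofReal (⨆ j, |Ψ.mulVec Δ j|)) :=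
        mul_le_mul_right (le_trans hinf hofs) _
    _ = ENNReal.ofReal (⨆ j, |Ψ.mulVec Δ j|) := by
        rw [← mul_assoc, one_div, ENNReal.inv_mul_cancel hsne (by simp), one_mul]
end

section
/- (Efron's inequality for self-normalized sums) If η_1,...,η_n are independent symmetric real random variables, then for every t > 0, P( |(1/n)∑_{i=1}^n η_i| / sqrt((1/n)∑_{i=1}^n η_i^2) ≥ t ) ≤ 2 exp(-n t^2 / 2). -/
/-!
By independence and symmetry, the law of `(η_i)` on `ℝⁿ` is invariant under each of the `2ⁿ`
coordinatewise sign flips `x ↦ s • x`, `s : Fin n → ℤˣ`. Averaging over the flips, it suffices to show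
that for every fixed `x ∈ ℝⁿ` at most `2ⁿ · 2 exp(-n t² / 2)` sign vectors put `s • x` in the
event. The self-normalizing denominator does not depend on `s`, so the event forces
`|∑ s_i x_i| ≥ t √(n ∑ x_i²)`, and the count of such `s` is bounded by Hoeffding's inequality for
Rademacher sums, proved by the Chernoff method with `cosh u ≤ exp (u² / 2)`.
-/

open MeasureTheory ProbabilityTheory Finset Real

section SelfNormalizedMean

variable {ι : Type*} [Fintype ι]

-- `x / 0 = 0` realizes the convention that the ratio is `0` when all `x i` vanish.
noncomputable def selfNormalizedMean (x : ι → ℝ) : ℝ :=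
  |(1 / (Fintype.card ι : ℝ)) * ∑ i, x i| / √((1 / (Fintype.card ι : ℝ)) * ∑ i, x i ^ 2)

lemma selfNormalizedMean_of_sum_sq_eq_zero {x : ι → ℝ} (h : ∑ i, x i ^ 2 = 0) :
    selfNormalizedMean x = 0 := by
  rw [selfNormalizedMean, h, mul_zero, sqrt_zero, div_zero]

lemma mul_sqrt_le_abs_sum_of_le_selfNormalizedMean {x : ι → ℝ} {t : ℝ} (ht : 0 < t)
    (h : t ≤ selfNormalizedMean x) :
    t * √(Fintype.card ι * ∑ i, x i ^ 2) ≤ |∑ i, x i| := by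
  set n : ℝ := (Fintype.card ι : ℝ)
  set D := √((1 / n) * ∑ i, x i ^ 2)
  have hmean : selfNormalizedMean x = |1 / n * ∑ i, x i| / D := rfl
  have hD : 0 < D := by
    by_contra! hD
    rw [hmean, le_antisymm hD (sqrt_nonneg _), div_zero] at h
    linarith
  have hn : 0 < n := by
    by_contra! hn
    simp [D, le_antisymm hn (Nat.cast_nonneg _)] at hD
  have hnD : √(n * ∑ i, x i ^ 2) = n * D := by
    rw [show n * ∑ i, x i ^ 2 = n ^ 2 * ((1 / n) * ∑ i, x i ^ 2) by field_simp,
      sqrt_mul (sq_nonneg n), sqrt_sq hn.le]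
  rw [hmean, le_div_iff₀ hD, abs_mul, abs_of_pos (by positivity : 0 < 1 / n)] at h
  calc t * √(n * ∑ i, x i ^ 2) = n * (t * D) := by rw [hnD]; ring
    _ ≤ n * (1 / n * |∑ i, x i|) := by gcongr
    _ = |∑ i, x i| := by field_simp

end SelfNormalizedMean

lemma units_int_smul_sq (u : ℤˣ) (b : ℝ) : (u • b) ^ 2 = b ^ 2 := by
  rcases Int.units_eq_one_or u with rfl | rfl <;> simp

lemma sum_units_int_exp_mul_smul (l b : ℝ) : ∑ u : ℤˣ, exp (l * u • b) = 2 * cosh (l * b) := by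
  rw [UnitsInt.univ, sum_pair (by decide), cosh_eq]
  simp only [one_smul, Units.neg_smul, mul_neg]
  ring

section Rademacher

variable {ι : Type*} [Fintype ι] [DecidableEq ι]

lemma sum_exp_mul_sum_units_smul_le (l : ℝ) (a : ι → ℝ) :
    ∑ s : ι → ℤˣ, exp (l * ∑ i, s i • a i) ≤
      2 ^ Fintype.card ι * exp (l ^ 2 * (∑ i, a i ^ 2) / 2) := by
  calc ∑ s : ι → ℤˣ, exp (l * ∑ i, s i • a i)
      = ∏ i, ∑ u : ℤˣ, exp (l * u • a i) := by
        rw [Fintype.prod_sum]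
        simp only [mul_sum, exp_sum]
    _ = ∏ i, 2 * cosh (l * a i) := by simp only [sum_units_int_exp_mul_smul]
    _ ≤ ∏ i, 2 * exp ((l * a i) ^ 2 / 2) := by
        gcongr with i
        exact cosh_le_exp_half_sq _
    _ = 2 ^ Fintype.card ι * exp (l ^ 2 * (∑ i, a i ^ 2) / 2) := by
        rw [prod_mul_distrib, prod_const, card_univ, ← exp_sum, mul_sum, sum_div]
        simp only [mul_pow]

lemma one_le_exp_add_exp_of_le_abs {l c x : ℝ} (hl : 0 ≤ l) (h : c ≤ |x|) :
    1 ≤ exp (l * (x - c)) + exp (l * (-x - c)) := by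
  rcases le_abs'.mp h with h | h
  · have := one_le_exp (mul_nonneg hl (by linarith : 0 ≤ -x - c))
    linarith [exp_pos (l * (x - c))]
  · have := one_le_exp (mul_nonneg hl (by linarith : 0 ≤ x - c))
    linarith [exp_pos (l * (-x - c))]

theorem card_le_abs_sum_units_smul_le (a : ι → ℝ) {c : ℝ} (hc : 0 ≤ c) :
    (#{s : ι → ℤˣ | c ≤ |∑ i, s i • a i|} : ℝ) ≤
      2 ^ Fintype.card ι * (2 * exp (-c ^ 2 / (2 * ∑ i, a i ^ 2))) := by
  set V := ∑ i, a i ^ 2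
  obtain hV | hV := (show 0 ≤ V from sum_nonneg fun i _ => sq_nonneg (a i)).eq_or_lt
  · rw [← hV, mul_zero, div_zero, exp_zero]
    calc (#{s : ι → ℤˣ | c ≤ |∑ i, s i • a i|} : ℝ) ≤ 2 ^ Fintype.card ι := by
          exact_mod_cast (card_filter_le _ _).trans_eq (by simp)
      _ ≤ 2 ^ Fintype.card ι * (2 * 1) := le_mul_of_one_le_right (by positivity) (by norm_num)
  set l := c / V
  have hl : 0 ≤ l := div_nonneg hc hV.le
  calc (#{s : ι → ℤˣ | c ≤ |∑ i, s i • a i|} : ℝ)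
      ≤ ∑ s : ι → ℤˣ, (exp (l * (∑ i, s i • a i - c)) + exp (l * (-∑ i, s i • a i - c))) := by
        rw [card_filter, Nat.cast_sum]
        gcongr with s
        split_ifs with h
        · exact_mod_cast one_le_exp_add_exp_of_le_abs hl h
        · simp only [Nat.cast_zero]; positivity
    _ = exp (-(l * c)) * (∑ s : ι → ℤˣ, exp (l * ∑ i, s i • a i)
          + ∑ s : ι → ℤˣ, exp (-l * ∑ i, s i • a i)) := by
        rw [sum_add_distrib, mul_add, mul_sum, mul_sum]
        congr 1 <;> exact sum_congr rfl fun s _ => by rw [← exp_add]; ring_nf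
    _ ≤ exp (-(l * c)) * (2 ^ Fintype.card ι * exp (l ^ 2 * V / 2)
          + 2 ^ Fintype.card ι * exp ((-l) ^ 2 * V / 2)) := by
        gcongr <;> apply sum_exp_mul_sum_units_smul_le
    _ = 2 ^ Fintype.card ι * (2 * exp (-c ^ 2 / (2 * V))) := by
        have hexp : -(l * c) + l ^ 2 * V / 2 = -c ^ 2 / (2 * V) := by
          simp only [l]
          field_simp
          ring
        rw [neg_sq, ← hexp, exp_add]
        ring

theorem card_le_selfNormalizedMean_units_smul_le (x : ι → ℝ) {t : ℝ} (ht : 0 < t) :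
    (#{s : ι → ℤˣ | t ≤ selfNormalizedMean (s • x)} : ℝ) ≤
      2 ^ Fintype.card ι * (2 * exp (-Fintype.card ι * t ^ 2 / 2)) := by
  have hsq : ∀ s : ι → ℤˣ, ∑ i, (s • x) i ^ 2 = ∑ i, x i ^ 2 := fun s =>
    sum_congr rfl fun i _ => units_int_smul_sq (s i) (x i)
  set V := ∑ i, x i ^ 2
  obtain hV | hV := (show 0 ≤ V from sum_nonneg fun i _ => sq_nonneg (x i)).eq_or_lt
  · have hempty : #{s : ι → ℤˣ | t ≤ selfNormalizedMean (s • x)} = 0 := by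
      rw [card_eq_zero, filter_eq_empty_iff]
      intro s _
      rw [selfNormalizedMean_of_sum_sq_eq_zero ((hsq s).trans hV.symm)]
      exact not_le.mpr ht
    rw [hempty, Nat.cast_zero]
    positivity
  set c := t * √(Fintype.card ι * V)
  have hcount : #{s : ι → ℤˣ | t ≤ selfNormalizedMean (s • x)} ≤
      #{s : ι → ℤˣ | c ≤ |∑ i, s i • x i|} := by
    refine card_le_card (monotone_filter_right _ fun s _ hs => ?_)
    simpa only [Pi.smul_apply', units_int_smul_sq] using
      mul_sqrt_le_abs_sum_of_le_selfNormalizedMean ht hs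
  have hc : -c ^ 2 / (2 * V) = -Fintype.card ι * t ^ 2 / 2 := by
    rw [mul_pow, sq_sqrt (by positivity)]
    field_simp
  calc (#{s : ι → ℤˣ | t ≤ selfNormalizedMean (s • x)} : ℝ)
      ≤ #{s : ι → ℤˣ | c ≤ |∑ i, s i • x i|} := by exact_mod_cast hcount
    _ ≤ 2 ^ Fintype.card ι * (2 * exp (-c ^ 2 / (2 * V))) :=
        card_le_abs_sum_units_smul_le x (by positivity)
    _ = 2 ^ Fintype.card ι * (2 * exp (-Fintype.card ι * t ^ 2 / 2)) := by rw [hc]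

end Rademacher

theorem measure_le_of_forall_card_filter_mem_le {S X : Type*} [Fintype S] [Nonempty S]
    [MeasurableSpace X] {μ : Measure X} [IsProbabilityMeasure μ] {g : S → X → X}
    (hg : ∀ s, MeasurePreserving (g s) μ μ) {B : Set X} (hB : MeasurableSet B)
    [DecidablePred (· ∈ B)] {K : ℝ}
    (hK : ∀ x, (#{s | g s x ∈ B} : ℝ) ≤ Fintype.card S * K) :
    μ B ≤ ENNReal.ofReal K := by
  have hcard : (Fintype.card S : ENNReal) ≠ 0 := by simp
  refine (ENNReal.mul_le_mul_iff_right hcard (ENNReal.natCast_ne_top _)).mp ?_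
  calc (Fintype.card S : ENNReal) * μ B
      = ∑ s, μ (g s ⁻¹' B) := by
        simp only [fun s => (hg s).measure_preimage hB.nullMeasurableSet, sum_const, card_univ,
          nsmul_eq_mul]
    _ = ∫⁻ x, (#{s | g s x ∈ B} : ENNReal) ∂μ := by
        simp only [← lintegral_indicator_one ((hg _).measurable hB)]
        rw [← lintegral_finsetSum _ fun s _ => measurable_one.indicator ((hg s).measurable hB)]
        refine lintegral_congr fun x => ?_
        rw [natCast_card_filter]
        refine sum_congr rfl fun s _ => ?_
        by_cases h : g s x ∈ B <;> simp [h]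
    _ ≤ ∫⁻ _, ENNReal.ofReal (Fintype.card S * K) ∂μ :=
        lintegral_mono fun x => by
          rw [← ENNReal.ofReal_natCast]
          exact ENNReal.ofReal_le_ofReal (hK x)
    _ = Fintype.card S * ENNReal.ofReal K := by
        rw [lintegral_const, measure_univ, mul_one, ENNReal.ofReal_mul (Nat.cast_nonneg _),
          ENNReal.ofReal_natCast]

lemma measurePreserving_units_smul_pi {ι : Type*} [Fintype ι] {ν : ι → Measure ℝ}
    [∀ i, SigmaFinite (ν i)] (hν : ∀ i, (ν i).map Neg.neg = ν i) (s : ι → ℤˣ) :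
    MeasurePreserving (s • ·) (Measure.pi ν) (Measure.pi ν) := by
  have hmap : ∀ i, (ν i).map (s i • ·) = ν i := fun i => by
    rcases Int.units_eq_one_or (s i) with hs | hs <;> simp only [hs, one_smul, Units.neg_smul]
    · exact Measure.map_id
    · exact hν i
  have : ∀ i, SigmaFinite ((ν i).map (s i • ·)) := fun i => by rw [hmap i]; infer_instance
  refine ⟨by fun_prop, ?_⟩
  change (Measure.pi ν).map (fun x i => s i • x i) = _
  rw [Measure.pi_map_pi fun i => by fun_prop]
  simp only [hmap]

theorem stmt6_general {Ω : Type*} [MeasurableSpace Ω] (P : Measure Ω)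
    [IsProbabilityMeasure P] (n : ℕ) (η : Fin n → Ω → ℝ)
    (hmeas : ∀ i, Measurable (η i))
    (hindep : iIndepFun η P)
    (hsymm : ∀ i, Measure.map (η i) P = Measure.map (fun ω => -η i ω) P)
    (t : ℝ) (ht : 0 < t) :
    P {ω | t ≤ |(1 / (n : ℝ)) * ∑ i, η i ω| /
        Real.sqrt ((1 / (n : ℝ)) * ∑ i, (η i ω) ^ 2)} ≤
      ENNReal.ofReal (2 * Real.exp (-(n : ℝ) * t ^ 2 / 2)) := by
  have hlaw : P.map (fun ω i => η i ω) = Measure.pi fun i => P.map (η i) :=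
    hindep.map_fun_eq_pi_map fun i => (hmeas i).aemeasurable
  have : ∀ i, IsProbabilityMeasure (P.map (η i)) := fun i =>
    Measure.isProbabilityMeasure_map (hmeas i).aemeasurable
  have hsymm' : ∀ i, (P.map (η i)).map Neg.neg = P.map (η i) := fun i => by
    rw [Measure.map_map measurable_neg (hmeas i), hsymm i]
    rfl
  have hB : MeasurableSet {x : Fin n → ℝ | t ≤ selfNormalizedMean x} :=
    measurableSet_le measurable_const (by unfold selfNormalizedMean; fun_prop)
  have hevent : {ω | t ≤ |(1 / (n : ℝ)) * ∑ i, η i ω| /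
      √((1 / (n : ℝ)) * ∑ i, (η i ω) ^ 2)} =
      (fun ω i => η i ω) ⁻¹' {x | t ≤ selfNormalizedMean x} := by
    ext ω
    simp [selfNormalizedMean]
  rw [hevent, ← Measure.map_apply (measurable_pi_lambda _ hmeas) hB, hlaw]
  refine measure_le_of_forall_card_filter_mem_le (g := fun s x => s • x)
    (measurePreserving_units_smul_pi hsymm') hB fun x => ?_
  simpa [Fintype.card_fin, Fintype.card_fun] using
    card_le_selfNormalizedMean_units_smul_le x ht

/-- Efron's inequality for self-normalized sums: if `η_1, …, η_n`
are independent symmetric real random variables, then for every `t > 0`,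
`P(|n⁻¹ ∑ η_i| / sqrt(n⁻¹ ∑ η_i²) ≥ t) ≤ 2 exp(-n t² / 2)`
(with the ratio interpreted as `0` when the denominator vanishes). -/
theorem stmt6 {Ω : Type*} [MeasurableSpace Ω] (P : Measure Ω)
    [IsProbabilityMeasure P] (n : ℕ) (hn : 0 < n) (η : Fin n → Ω → ℝ)
    (hmeas : ∀ i, Measurable (η i))
    (hindep : iIndepFun η P)
    (hsymm : ∀ i, Measure.map (η i) P = Measure.map (fun ω => -η i ω) P)
    (t : ℝ) (ht : 0 < t) :
    P {ω | t ≤ |(1 / (n : ℝ)) * ∑ i, η i ω| /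
        Real.sqrt ((1 / (n : ℝ)) * ∑ i, (η i ω) ^ 2)} ≤
      ENNReal.ofReal (2 * Real.exp (-(n : ℝ) * t ^ 2 / 2)) :=
  stmt6_general P n η hmeas hindep hsymm t ht
end

section
/- Let x_{ki}u_i (i=1,...,n, k=1,...,p) be such that for each k, the variables x_{ki}u_i, i=1,...,n, are independent and symmetric. Let r = sqrt(2 log(4p/α)/n) with 0 < α < 1, and let d_{kk} > 0. Then with probability at least 1 − α/2, simultaneously for all k = 1,...,p: |(d_{kk}/n) ∑_{i=1}^n x_{ki} u_i| ≤ r · sqrt( max_{j=1,...,p} (d_{jj}^2/n) ∑_{i=1}^n x_{ji}^2 u_i^2 ). -/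
open MeasureTheory ProbabilityTheory Finset Real
open scoped ENNReal

/-!
Efron's symmetrization: if the `η i` are independent and symmetric, then for every fixed sign
pattern `ε` the vector `(ε i * η i)ᵢ` has the same law as `(η i)ᵢ`. Averaging over the `2 ^ n`
sign patterns, `P (|∑ η i| > t * √(∑ η i ^ 2))` is at most the largest fraction, over vectors
`y`, of patterns with `|∑ ε i * y i| > t * ‖y‖`, and a Chernoff bound (`cosh x ≤ exp (x ^ 2 / 2)`)
bounds that fraction by `2 * exp (-t ^ 2 / 2)`. With `t = √(2 * log (4 * p / α))` each of the
`p` events fails with probability at most `α / (2 * p)`; conclude by a union bound and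
`d k ^ 2 * ∑ (x k i * u i) ^ 2 ≤ n * max_j …`.
-/

def boolSign (b : Bool) : ℝ := if b then 1 else -1

@[simp] lemma boolSign_true : boolSign true = 1 := rfl

@[simp] lemma boolSign_false : boolSign false = -1 := rfl

lemma boolSign_sq (b : Bool) : boolSign b ^ 2 = 1 := by
  cases b <;> norm_num

lemma sum_bool_exp_boolSign_mul (x : ℝ) : ∑ b : Bool, exp (boolSign b * x) = 2 * cosh x := by
  rw [cosh_eq, Fintype.sum_bool]
  simp only [boolSign_true, boolSign_false, one_mul, neg_one_mul]
  ring

section Rademacher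

variable {ι : Type*} [Fintype ι] [DecidableEq ι]

lemma sum_exp_mul_sum_boolSign_le (a : ι → ℝ) (l : ℝ) :
    ∑ ε : ι → Bool, exp (l * ∑ i, boolSign (ε i) * a i) ≤
      2 ^ Fintype.card ι * exp (l ^ 2 * (∑ i, a i ^ 2) / 2) := by
  calc ∑ ε : ι → Bool, exp (l * ∑ i, boolSign (ε i) * a i)
      = ∏ i, ∑ b : Bool, exp (boolSign b * (l * a i)) := by
        rw [Fintype.prod_sum]
        refine sum_congr rfl fun ε _ => ?_
        rw [mul_sum, ← exp_sum]
        exact congrArg exp (sum_congr rfl fun i _ => by ring)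
    _ = ∏ i, 2 * cosh (l * a i) := by simp only [sum_bool_exp_boolSign_mul]
    _ ≤ ∏ i, 2 * exp ((l * a i) ^ 2 / 2) :=
        prod_le_prod (fun i _ => by positivity)
          fun i _ => mul_le_mul_of_nonneg_left (cosh_le_exp_half_sq _) two_pos.le
    _ = 2 ^ Fintype.card ι * exp (l ^ 2 * (∑ i, a i ^ 2) / 2) := by
        rw [prod_mul_distrib, prod_const, card_univ, ← exp_sum, mul_sum, sum_div]
        simp only [mul_pow]

lemma card_lt_sum_boolSign_le (a : ι → ℝ) {t : ℝ} (ht : 0 ≤ t) :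
    (#{ε : ι → Bool | t * √(∑ i, a i ^ 2) < ∑ i, boolSign (ε i) * a i} : ℝ) ≤
      2 ^ Fintype.card ι * exp (-t ^ 2 / 2) := by
  set A := ∑ i, a i ^ 2
  have hA_nonneg : 0 ≤ A := sum_nonneg fun i _ => sq_nonneg (a i)
  rcases hA_nonneg.eq_or_lt with hA | hA
  · have ha : ∀ i, a i = 0 := fun i =>
      pow_eq_zero_iff two_ne_zero |>.1 <|
        (sum_eq_zero_iff_of_nonneg fun i _ => sq_nonneg (a i)).1 hA.symm i (mem_univ i)
    simp [ha, ← hA, (exp_pos _).le]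
  -- Chernoff bound with the optimal exponent `l = t / √A`
  set l := t / √A
  have hsA : 0 < √A := sqrt_pos.2 hA
  have hindicator : ∀ ε : ι → Bool,
      (if t * √A < ∑ i, boolSign (ε i) * a i then (1 : ℝ) else 0) ≤
        exp (-t ^ 2) * exp (l * ∑ i, boolSign (ε i) * a i) := by
    intro ε
    rw [← exp_add]
    split_ifs with h
    · refine one_le_exp ?_
      have : t ^ 2 = l * (t * √A) := by simp only [l]; field_simp
      rw [this]
      nlinarith [div_nonneg ht hsA.le]
    · positivity
  calc (#{ε : ι → Bool | t * √A < ∑ i, boolSign (ε i) * a i} : ℝ)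
      = ∑ ε : ι → Bool, if t * √A < ∑ i, boolSign (ε i) * a i then (1 : ℝ) else 0 := by
        rw [sum_boole]
    _ ≤ exp (-t ^ 2) * ∑ ε : ι → Bool, exp (l * ∑ i, boolSign (ε i) * a i) := by
        rw [mul_sum]; exact sum_le_sum fun ε _ => hindicator ε
    _ ≤ exp (-t ^ 2) * (2 ^ Fintype.card ι * exp (l ^ 2 * A / 2)) :=
        mul_le_mul_of_nonneg_left (sum_exp_mul_sum_boolSign_le a l) (exp_pos _).le
    _ = 2 ^ Fintype.card ι * exp (-t ^ 2 / 2) := by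
        have : l ^ 2 * A = t ^ 2 := by
          rw [div_pow, sq_sqrt hA.le]; field_simp
        rw [this, mul_left_comm, ← exp_add]
        ring_nf

lemma card_lt_abs_sum_boolSign_le (a : ι → ℝ) {t : ℝ} (ht : 0 ≤ t) :
    (#{ε : ι → Bool | t * √(∑ i, a i ^ 2) < |∑ i, boolSign (ε i) * a i|} : ℝ) ≤
      2 ^ Fintype.card ι * (2 * exp (-t ^ 2 / 2)) := by
  have hneg : ∀ ε : ι → Bool,
      -∑ i, boolSign (ε i) * a i = ∑ i, boolSign (ε i) * (-a i) := fun ε => by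
    rw [← sum_neg_distrib]; simp only [mul_neg]
  have hsq : ∑ i, (-a i) ^ 2 = ∑ i, a i ^ 2 := by simp only [neg_sq]
  simp only [lt_abs, filter_or, hneg]
  calc _ ≤ (#{ε : ι → Bool | t * √(∑ i, a i ^ 2) < ∑ i, boolSign (ε i) * a i} : ℝ) +
          #{ε : ι → Bool | t * √(∑ i, (-a i) ^ 2) < ∑ i, boolSign (ε i) * (-a i)} := by
        rw [hsq]; exact_mod_cast card_union_le _ _
    _ ≤ _ := by
        linarith [card_lt_sum_boolSign_le a ht, card_lt_sum_boolSign_le (fun i => -a i) ht]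

end Rademacher

section Symmetrization

variable {Ω ι : Type*} [MeasurableSpace Ω] [Fintype ι]

lemma ProbabilityTheory.iIndepFun.map_fun_comp_eq {β : Type*} [MeasurableSpace β] {P : Measure Ω}
    {f : ι → Ω → β} (hf : ∀ i, Measurable (f i)) (hind : iIndepFun f P)
    {g : ι → β → β} (hg : ∀ i, Measurable (g i)) (hmarg : ∀ i, P.map (g i ∘ f i) = P.map (f i)) :
    P.map (fun ω i => g i (f i ω)) = P.map (fun ω i => f i ω) := by
  rw [hind.map_fun_eq_pi_map fun i => (hf i).aemeasurable, ← funext hmarg]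
  exact (hind.comp g hg).map_fun_eq_pi_map fun i => ((hg i).comp (hf i)).aemeasurable

lemma sum_measure_le_mul_measure_univ {α : Type*} [MeasurableSpace α] (μ : Measure α)
    {S : ι → Set α} (hS : ∀ i, MeasurableSet (S i)) [∀ x, DecidablePred fun i => x ∈ S i]
    {c : ℝ≥0∞} (hc : ∀ x, (#{i | x ∈ S i} : ℝ≥0∞) ≤ c) :
    ∑ i, μ (S i) ≤ c * μ Set.univ := by
  calc ∑ i, μ (S i) = ∫⁻ x, ∑ i, (S i).indicator 1 x ∂μ := by
        rw [lintegral_finsetSum _ fun i _ => measurable_one.indicator (hS i)]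
        simp only [lintegral_indicator_one (hS _)]
    _ = ∫⁻ x, (#{i | x ∈ S i} : ℝ≥0∞) ∂μ := by
        simp only [Set.indicator_apply, Pi.one_apply, sum_boole]
    _ ≤ ∫⁻ _, c ∂μ := lintegral_mono hc
    _ = c * μ Set.univ := lintegral_const c

theorem measure_abs_sum_gt_le {P : Measure Ω} [IsProbabilityMeasure P]
    {η : ι → Ω → ℝ} (hmeas : ∀ i, Measurable (η i)) (hindep : iIndepFun η P)
    (hsymm : ∀ i, P.map (η i) = P.map (fun ω => -η i ω)) {t : ℝ} (ht : 0 ≤ t) :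
    P {ω | t * √(∑ i, η i ω ^ 2) < |∑ i, η i ω|} ≤ ENNReal.ofReal (2 * exp (-t ^ 2 / 2)) := by
  classical
  set ν := P.map (fun ω i => η i ω)
  have : IsProbabilityMeasure ν := Measure.isProbabilityMeasure_map (by fun_prop)
  let B : Set (ι → ℝ) := {y | t * √(∑ i, y i ^ 2) < |∑ i, y i|}
  have hB : MeasurableSet B := measurableSet_lt (by fun_prop) (by fun_prop)
  let flip (ε : ι → Bool) (y : ι → ℝ) : ι → ℝ := fun i => boolSign (ε i) * y i
  have hflip : ∀ ε, Measurable (flip ε) := fun ε => by fun_prop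
  let S (ε : ι → Bool) : Set (ι → ℝ) := {y | t * √(∑ i, y i ^ 2) < |∑ i, boolSign (ε i) * y i|}
  have hS : ∀ ε, S ε = flip ε ⁻¹' B := fun ε => by
    ext y
    simp only [S, B, flip, Set.mem_preimage, Set.mem_ofPred_eq, mul_pow, boolSign_sq, one_mul]
  -- flipping signs preserves the joint law of the `η i`, so every `S ε` has the same measure
  have hνS : ∀ ε, ν (S ε) = P {ω | t * √(∑ i, η i ω ^ 2) < |∑ i, η i ω|} := fun ε => by
    have hmarg : ∀ i, P.map ((fun v => boolSign (ε i) * v) ∘ η i) = P.map (η i) := fun i => by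
      cases ε i
      · simpa [Function.comp_def] using (hsymm i).symm
      · simp [Function.comp_def]
    calc ν (S ε) = P.map (fun ω i => boolSign (ε i) * η i ω) B := by
          rw [hS, ← Measure.map_apply (hflip ε) hB, Measure.map_map (hflip ε) (by fun_prop)]
          rfl
      _ = ν B := by
          congr 1
          exact hindep.map_fun_comp_eq hmeas (fun i => by fun_prop) hmarg
      _ = _ := Measure.map_apply (by fun_prop) hB
  have key := sum_measure_le_mul_measure_univ ν (fun ε => (hS ε).symm ▸ hflip ε hB)
    (c := ENNReal.ofReal (2 ^ Fintype.card ι * (2 * exp (-t ^ 2 / 2))))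
    fun y => by
      rw [← ENNReal.ofReal_natCast]
      exact ENNReal.ofReal_le_ofReal (card_lt_abs_sum_boolSign_le y ht)
  simp only [hνS, sum_const, card_univ, Fintype.card_fun, Fintype.card_bool, nsmul_eq_mul,
    measure_univ, mul_one, ENNReal.ofReal_mul (by positivity : (0 : ℝ) ≤ 2 ^ Fintype.card ι),
    ENNReal.ofReal_pow zero_le_two, ENNReal.ofReal_ofNat, Nat.cast_pow, Nat.cast_ofNat] at key
  exact (ENNReal.mul_le_mul_iff_right (pow_ne_zero _ two_ne_zero)
    (ENNReal.pow_ne_top ENNReal.ofNat_ne_top)).1 key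

end Symmetrization

lemma ofReal_one_sub_card_mul_le_measure_iInter_compl {Ω ι : Type*} [MeasurableSpace Ω]
    [Fintype ι] {P : Measure Ω} [IsProbabilityMeasure P] {A : ι → Set Ω} {δ : ℝ} (hδ : 0 ≤ δ)
    (hA : ∀ i, P (A i) ≤ ENNReal.ofReal δ) :
    ENNReal.ofReal (1 - Fintype.card ι * δ) ≤ P (⋂ i, (A i)ᶜ) := by
  have hunion : P (⋃ i, A i) ≤ ENNReal.ofReal (Fintype.card ι * δ) :=
    calc P (⋃ i, A i) ≤ ∑ i, P (A i) := measure_iUnion_fintype_le P A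
      _ ≤ ∑ _i : ι, ENNReal.ofReal δ := sum_le_sum fun i _ => hA i
      _ = ENNReal.ofReal (Fintype.card ι * δ) := by
        rw [sum_const, card_univ, nsmul_eq_mul, ENNReal.ofReal_mul (Nat.cast_nonneg _),
          ENNReal.ofReal_natCast]
  rw [← Set.compl_iUnion, ENNReal.ofReal_sub _ (by positivity), ENNReal.ofReal_one,
    tsub_le_iff_left, ← measure_univ (μ := P)]
  exact (measure_univ_le_add_compl _).trans (by gcongr)

lemma two_mul_exp_neg_sqrt_two_mul_log_sq {c : ℝ} (hc : 1 ≤ c) :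
    2 * exp (-√(2 * log c) ^ 2 / 2) = 2 / c := by
  rw [sq_sqrt (mul_nonneg zero_le_two (log_nonneg hc)), neg_div,
    mul_div_cancel_left₀ _ two_ne_zero, exp_neg, exp_log (by linarith), div_eq_mul_inv]

lemma abs_div_mul_le_div_sqrt_mul_sqrt {d N S V t : ℝ} (hd : 0 ≤ d) (hN : 0 ≤ N)
    (hS : |S| ≤ t * √V) : |d / N * S| ≤ t / √N * √(d ^ 2 / N * V) := by
  calc |d / N * S| = d / N * |S| := by rw [abs_mul, abs_of_nonneg (div_nonneg hd hN)]
    _ ≤ d / N * (t * √V) := mul_le_mul_of_nonneg_left hS (div_nonneg hd hN)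
    _ = t / √N * √(d ^ 2 / N * V) := by
      rw [sqrt_mul (by positivity), sqrt_div' _ hN, sqrt_sq hd,
        show t / √N * (d / √N * √V) = d / (√N * √N) * (t * √V) by ring, mul_self_sqrt hN]

theorem stmt7_general {Ω : Type*} [MeasurableSpace Ω] (P : Measure Ω)
    [IsProbabilityMeasure P] (n p : ℕ) (hp : 0 < p)
    (x : Fin p → Fin n → Ω → ℝ) (u : Fin n → Ω → ℝ)
    (hmeas : ∀ k i, Measurable (fun ω => x k i ω * u i ω))
    (hindep : ∀ k, iIndepFun
      (fun i ω => x k i ω * u i ω) P)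
    (hsymm : ∀ k i, Measure.map (fun ω => x k i ω * u i ω) P =
      Measure.map (fun ω => -(x k i ω * u i ω)) P)
    (d : Fin p → ℝ) (hd : ∀ k, 0 < d k)
    (α : ℝ) (hα : 0 < α) (hα1 : α < 1)
    (r : ℝ) (hr : r = Real.sqrt (2 * Real.log (4 * p / α) / n)) :
    ENNReal.ofReal (1 - α / 2) ≤
      P {ω | ∀ k, |(d k / n) * ∑ i, x k i ω * u i ω| ≤
        r * Real.sqrt (⨆ j, (d j) ^ 2 / n * ∑ i, (x j i ω) ^ 2 * (u i ω) ^ 2)} := by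
  set t := √(2 * log (4 * p / α))
  have hp' : (1 : ℝ) ≤ p := by exact_mod_cast hp
  have hbad : ∀ k, P {ω | t * √(∑ i, (x k i ω * u i ω) ^ 2) < |∑ i, x k i ω * u i ω|} ≤
      ENNReal.ofReal (α / (2 * p)) := fun k => by
    refine (measure_abs_sum_gt_le (hmeas k) (hindep k) (hsymm k) (sqrt_nonneg _)).trans_eq ?_
    rw [two_mul_exp_neg_sqrt_two_mul_log_sq (by rw [le_div_iff₀ hα]; linarith)]
    congr 1
    field_simp
    norm_num
  rw [show 1 - α / 2 = 1 - Fintype.card (Fin p) * (α / (2 * p)) by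
    rw [Fintype.card_fin]; field_simp]
  refine (ofReal_one_sub_card_mul_le_measure_iInter_compl (by positivity) hbad).trans
    (measure_mono fun ω hω k => ?_)
  simp only [Set.mem_iInter, Set.mem_compl_iff, Set.mem_ofPred_eq, not_lt] at hω
  have hrt : r = t / √n := by rw [hr, sqrt_div' _ (Nat.cast_nonneg n)]
  have hmax : d k ^ 2 / n * ∑ i, (x k i ω * u i ω) ^ 2 ≤
      ⨆ j, d j ^ 2 / n * ∑ i, x j i ω ^ 2 * u i ω ^ 2 := by
    simp only [mul_pow]
    exact le_ciSup (f := fun j => d j ^ 2 / n * ∑ i, x j i ω ^ 2 * u i ω ^ 2)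
      (Set.finite_range _).bddAbove k
  calc _ ≤ t / √n * √(d k ^ 2 / n * ∑ i, (x k i ω * u i ω) ^ 2) :=
        abs_div_mul_le_div_sqrt_mul_sqrt (hd k).le (Nat.cast_nonneg n) (hω k)
    _ ≤ _ := by
        rw [← hrt]
        exact mul_le_mul_of_nonneg_left (sqrt_le_sqrt hmax) (hr ▸ sqrt_nonneg _)

/-- the event `𝒢` of Theorem 1. If for each `k` the variables
`x_{ki} u_i`, `i = 1, …, n`, are independent and symmetric, and
`r = sqrt(2 log(4p/α)/n)`, then with probability at least `1 - α/2`,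
simultaneously for all `k`,
`|(d_k/n) ∑_i x_{ki} u_i| ≤ r sqrt(max_j (d_j²/n) ∑_i x_{ji}² u_i²)`. -/
theorem stmt7 {Ω : Type*} [MeasurableSpace Ω] (P : Measure Ω)
    [IsProbabilityMeasure P] (n p : ℕ) (hn : 0 < n) (hp : 0 < p)
    (x : Fin p → Fin n → Ω → ℝ) (u : Fin n → Ω → ℝ)
    (hmeas : ∀ k i, Measurable (fun ω => x k i ω * u i ω))
    (hindep : ∀ k, iIndepFun
      (fun i ω => x k i ω * u i ω) P)
    (hsymm : ∀ k i, Measure.map (fun ω => x k i ω * u i ω) P =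
      Measure.map (fun ω => -(x k i ω * u i ω)) P)
    (d : Fin p → ℝ) (hd : ∀ k, 0 < d k)
    (α : ℝ) (hα : 0 < α) (hα1 : α < 1)
    (r : ℝ) (hr : r = Real.sqrt (2 * Real.log (4 * p / α) / n)) :
    ENNReal.ofReal (1 - α / 2) ≤
      P {ω | ∀ k, |(d k / n) * ∑ i, x k i ω * u i ω| ≤
        r * Real.sqrt (⨆ j, (d j) ^ 2 / n * ∑ i, (x j i ω) ^ 2 * (u i ω) ^ 2)} :=
  stmt7_general P n p hp x u hmeas hindep hsymm d hd α hα hα1 r hr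
end

section
/- Under the same setup (with (β̂,σ̂) ∈ D̂, (β*,sqrt(Q̂)) ∈ D̂, and the minimality inequality), with Ψ_n = (1/n)DX^TXD and Δ = D^{-1}(β̂−β*): |Ψ_n Δ|_∞ ≤ r(2·sqrt(Q̂) + (1/c)|Δ_J|_1), where J = supp(β*). -/
open Matrix

/-- under the setup of Statement 8, with `Ψ_n = (1/n) D XᵀX D`
and `Δ = D⁻¹(β̂ - β*)`: `|Ψ_n Δ|_∞ ≤ r (2 sqrt Q̂ + (1/c)|Δ_J|_1)`. -/
theorem stmt10 (n p : ℕ) (hn : 0 < n)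
    (X : Matrix (Fin n) (Fin p) ℝ) (Y : Fin n → ℝ)
    (d : Fin p → ℝ) (hd : ∀ k, 0 < d k) (r c : ℝ) (hr : 0 < r) (hc : 0 < c)
    (βh βs : Fin p → ℝ) (σh Qh : ℝ)
    (hσh : 0 < σh)
    (hβh : ∀ k, |d k * ((1 / (n : ℝ)) * ∑ i, X i k * (Y i - ∑ j, X i j * βh j))| ≤ σh * r)
    (hQpos : 0 < Real.sqrt Qh)
    (hβs : ∀ k, |d k * ((1 / (n : ℝ)) * ∑ i, X i k * (Y i - ∑ j, X i j * βs j))| ≤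
      Real.sqrt Qh * r)
    (hmin : ∀ (β : Fin p → ℝ) (σ : ℝ), 0 < σ →
      (∀ k, |d k * ((1 / (n : ℝ)) * ∑ i, X i k * (Y i - ∑ j, X i j * β j))| ≤ σ * r) →
      (∑ k, |βh k / d k|) + c * σh ≤ (∑ k, |β k / d k|) + c * σ) :
    ∀ k, |d k * ((1 / (n : ℝ)) * ∑ i, X i k * ∑ j, X i j * (βh j - βs j))| ≤
      r * (2 * Real.sqrt Qh +
        (1 / c) * ∑ k ∈ Finset.univ.filter (fun k => βs k ≠ 0), |(βh k - βs k) / d k|) := by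
  set S : ℝ := ∑ k ∈ Finset.univ.filter (fun k => βs k ≠ 0), |(βh k - βs k) / d k| with hS
  -- first: σh ≤ √Qh + S/c
  have hmin' := hmin βs (Real.sqrt Qh) hQpos hβs
  have hsum : (∑ k, |βs k / d k|) - (∑ k, |βh k / d k|) ≤ S := by
    have h1 : (∑ k, |βs k / d k|) - (∑ k, |βh k / d k|)
        = ∑ k, (|βs k / d k| - |βh k / d k|) := by
      rw [Finset.sum_sub_distrib]
    rw [h1, hS]
    have h2 : ∀ k : Fin p, |βs k / d k| - |βh k / d k|
        ≤ (if βs k ≠ 0 then |(βh k - βs k) / d k| else 0) := by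
      intro k
      by_cases h : βs k ≠ 0
      · rw [if_pos h]
        have := abs_sub_abs_le_abs_sub (βs k / d k) (βh k / d k)
        have heq : βs k / d k - βh k / d k = -((βh k - βs k) / d k) := by ring
        rw [heq, abs_neg] at this
        linarith
      · rw [if_neg h]
        have h0 : βs k = 0 := not_not.mp h
        rw [h0, zero_div, abs_zero]
        have := abs_nonneg (βh k / d k)
        linarith
    calc ∑ k, (|βs k / d k| - |βh k / d k|)
        ≤ ∑ k, (if βs k ≠ 0 then |(βh k - βs k) / d k| else 0) :=
          Finset.sum_le_sum fun k _ => h2 k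
      _ = ∑ k ∈ Finset.univ.filter (fun k => βs k ≠ 0), |(βh k - βs k) / d k| := by
          rw [Finset.sum_filter]
  have hσ : σh ≤ Real.sqrt Qh + S / c := by
    have hcS : c * σh ≤ c * (Real.sqrt Qh + S / c) := by
      have hexp : c * (Real.sqrt Qh + S / c) = c * Real.sqrt Qh + S := by field_simp
      linarith
    exact le_of_mul_le_mul_left hcS hc
  intro k
  have key : d k * ((1 / (n : ℝ)) * ∑ i, X i k * ∑ j, X i j * (βh j - βs j))
      = d k * ((1 / (n : ℝ)) * ∑ i, X i k * (Y i - ∑ j, X i j * βs j))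
      - d k * ((1 / (n : ℝ)) * ∑ i, X i k * (Y i - ∑ j, X i j * βh j)) := by
    rw [← mul_sub, ← mul_sub, ← Finset.sum_sub_distrib]
    congr 2
    apply Finset.sum_congr rfl
    intro i _
    rw [← mul_sub]
    congr 1
    have hsplit : ∑ j, X i j * (βh j - βs j)
        = (∑ j, X i j * βh j) - ∑ j, X i j * βs j := by
      rw [← Finset.sum_sub_distrib]
      exact Finset.sum_congr rfl fun j _ => by ring
    rw [hsplit]
    ring
  rw [key]
  have h1 := hβs k
  have h2 := hβh k
  have htri := abs_sub (d k * ((1 / (n : ℝ)) * ∑ i, X i k * (Y i - ∑ j, X i j * βs j)))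
    (d k * ((1 / (n : ℝ)) * ∑ i, X i k * (Y i - ∑ j, X i j * βh j)))
  have : |d k * ((1 / (n : ℝ)) * ∑ i, X i k * (Y i - ∑ j, X i j * βs j))
      - d k * ((1 / (n : ℝ)) * ∑ i, X i k * (Y i - ∑ j, X i j * βh j))|
      ≤ Real.sqrt Qh * r + σh * r := by
    calc _ ≤ _ := abs_sub _ _
      _ ≤ Real.sqrt Qh * r + σh * r := add_le_add h1 h2
  have hScr : σh * r ≤ (Real.sqrt Qh + S / c) * r := by
    exact mul_le_mul_of_nonneg_right hσ hr.le
  have hfin : Real.sqrt Qh * r + (Real.sqrt Qh + S / c) * r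
      = r * (2 * Real.sqrt Qh + (1 / c) * S) := by
    field_simp
    ring
  linarith
end
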